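/- arXiv:1612.03936 — 7 statements merged into one kernel-verified Lean document; each statement's English description precedes it below -/
import Mathlib

section
/- Let (a_n)_{n≥0} and (b_n)_{n≥1} be sequences of nonnegative reals with a_0 = 1, a_n > 0 for all n, satisfying the convolution relation a_m = ∑_{n=1}^m b_n a_{m−n} for all m ≥ 1. If the power series ∑_{n≥0} a_n t^n has radius of convergence 1 (in particular ∑ a_n t^n < ∞ for 0 ≤ t < 1), then ∑_{n≥1} b_n ≤ 1. -/
open Finset Filter Topology

/-- If `a₀ = 1`, `aₙ > 0`, `bₙ ≥ 0`, the convolution relation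
`aₘ = ∑_{n=1}^m bₙ a_{m-n}` holds for all `m ≥ 1`, and the power series `∑ aₙ tⁿ`
has radius of convergence `1` (so it converges for `0 ≤ t < 1` and diverges for `t > 1`),
then `∑_{n≥1} bₙ ≤ 1`. -/
theorem stmt_1 (a b : ℕ → ℝ) (ha0 : a 0 = 1) (hapos : ∀ n, 0 < a n) (hb : ∀ n, 0 ≤ b n)
    (hconv : ∀ m : ℕ, 1 ≤ m → a m = ∑ n ∈ Finset.Icc 1 m, b n * a (m - n))
    (hradius₁ : ∀ t : ℝ, 0 ≤ t → t < 1 → Summable fun n => a n * t ^ n)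
    (hradius₂ : ∀ t : ℝ, 1 < t → ¬ Summable fun n => a n * t ^ n) :
    Summable (fun n => b (n + 1)) ∧ ∑' n : ℕ, b (n + 1) ≤ 1 := by
  -- The key claim: every partial sum of b is ≤ 1.
  have key : ∀ N : ℕ, ∑ n ∈ Finset.Icc 1 N, b n ≤ 1 := by
    intro N
    -- For each t ∈ (0,1), the partial sum times t^N is ≤ 1.
    have step : ∀ t : ℝ, t ∈ Set.Ioo (0:ℝ) 1 →
        (∑ n ∈ Finset.Icc 1 N, b n) * t ^ N ≤ 1 := by
      rintro t ⟨ht0, ht1⟩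
      have ht0' : (0:ℝ) ≤ t := ht0.le
      have hS : Summable fun n => a n * t ^ n := hradius₁ t ht0' ht1
      set A : ℝ := ∑' k, a k * t ^ k with hA
      have hterm : ∀ k, 0 ≤ a k * t ^ k := fun k =>
        mul_nonneg (hapos k).le (pow_nonneg ht0' k)
      have hA1 : 1 ≤ A := by
        have := Summable.le_tsum hS 0 (fun i _ => hterm i)
        simpa [ha0] using this
      -- finite convolution inequality
      have fin : ∀ M : ℕ,
          (∑ n ∈ Finset.Icc 1 N, b n * t ^ n) * (∑ k ∈ Finset.range (M+1), a k * t ^ k)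
            ≤ A - 1 := by
        intro M
        have lhs_eq : (∑ n ∈ Finset.Icc 1 N, b n * t ^ n) *
            (∑ k ∈ Finset.range (M+1), a k * t ^ k)
            = ∑ p ∈ (Finset.Icc 1 N) ×ˢ (Finset.range (M+1)),
                b p.1 * a p.2 * t ^ (p.1 + p.2) := by
          rw [Finset.sum_mul_sum]
          rw [Finset.sum_product]
          refine Finset.sum_congr rfl fun n _ => Finset.sum_congr rfl fun k _ => ?_
          rw [pow_add]; ring
        have rhs_eq : ∑ m ∈ Finset.Icc 1 (N+M), a m * t ^ m
            = ∑ q ∈ (Finset.Icc 1 (N+M)).sigma (fun m => Finset.Icc 1 m),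
                b q.2 * a (q.1 - q.2) * t ^ q.1 := by
          rw [Finset.sum_sigma]
          refine Finset.sum_congr rfl fun m hm => ?_
          rw [hconv m (Finset.mem_Icc.mp hm).1, Finset.sum_mul]
        -- injection (n,k) ↦ ⟨n+k, n⟩
        have inj_le : ∑ p ∈ (Finset.Icc 1 N) ×ˢ (Finset.range (M+1)),
                b p.1 * a p.2 * t ^ (p.1 + p.2)
            ≤ ∑ q ∈ (Finset.Icc 1 (N+M)).sigma (fun m => Finset.Icc 1 m),
                b q.2 * a (q.1 - q.2) * t ^ q.1 := by
          set S := (Finset.Icc 1 N) ×ˢ (Finset.range (M+1)) with hSdef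
          set g : (Σ _ : ℕ, ℕ) → ℝ := fun q => b q.2 * a (q.1 - q.2) * t ^ q.1 with hg
          set f : ℕ × ℕ → (Σ _ : ℕ, ℕ) := fun p => ⟨p.1 + p.2, p.1⟩ with hf
          have hinj : Set.InjOn f S := by
            rintro ⟨n₁, k₁⟩ _ ⟨n₂, k₂⟩ _ h
            simp only [hf, Sigma.mk.inj_iff, heq_eq_eq] at h
            obtain ⟨h1, h2⟩ := h
            subst h2
            simp_all
          have h1 : ∑ p ∈ S, b p.1 * a p.2 * t ^ (p.1 + p.2) = ∑ p ∈ S, g (f p) := by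
            refine Finset.sum_congr rfl fun p _ => ?_
            simp [hg, hf]
          have h2 : ∑ p ∈ S, g (f p) = ∑ q ∈ S.image f, g q :=
            (Finset.sum_image fun p hp p' hp' h => hinj hp hp' h).symm
          have hsub : S.image f ⊆ (Finset.Icc 1 (N+M)).sigma (fun m => Finset.Icc 1 m) := by
            intro q hq
            simp only [Finset.mem_image, hSdef, Finset.mem_product, Finset.mem_Icc,
              Finset.mem_range] at hq
            obtain ⟨⟨n, k⟩, ⟨hn, hk⟩, rfl⟩ := hq
            simp only [hf, Finset.mem_sigma, Finset.mem_Icc]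
            omega
          rw [h1, h2]
          refine Finset.sum_le_sum_of_subset_of_nonneg hsub fun q _ _ => ?_
          exact mul_nonneg (mul_nonneg (hb _) (hapos _).le) (pow_nonneg ht0' _)
        have tail_le : ∑ m ∈ Finset.Icc 1 (N+M), a m * t ^ m ≤ A - 1 := by
          have hins : Finset.range (N+M+1) = insert 0 (Finset.Icc 1 (N+M)) := by
            ext x; simp; omega
          have h0 : (0:ℕ) ∉ Finset.Icc 1 (N+M) := by simp
          have hsum : ∑ m ∈ Finset.range (N+M+1), a m * t ^ m ≤ A :=
            Summable.sum_le_tsum _ (fun i _ => hterm i) hS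
          rw [hins, Finset.sum_insert h0] at hsum
          simp [ha0] at hsum
          linarith
        calc (∑ n ∈ Finset.Icc 1 N, b n * t ^ n) *
              (∑ k ∈ Finset.range (M+1), a k * t ^ k)
            = _ := lhs_eq
          _ ≤ _ := inj_le
          _ = ∑ m ∈ Finset.Icc 1 (N+M), a m * t ^ m := rhs_eq.symm
          _ ≤ A - 1 := tail_le
      -- pass to the limit M → ∞
      have hlim : Filter.Tendsto
          (fun M : ℕ => (∑ n ∈ Finset.Icc 1 N, b n * t ^ n) *
            (∑ k ∈ Finset.range (M+1), a k * t ^ k)) Filter.atTop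
          (𝓝 ((∑ n ∈ Finset.Icc 1 N, b n * t ^ n) * A)) := by
        have h1 : Filter.Tendsto (fun M : ℕ => ∑ k ∈ Finset.range (M+1), a k * t ^ k)
            Filter.atTop (𝓝 A) :=
          (hS.hasSum.tendsto_sum_nat).comp (Filter.tendsto_add_atTop_nat 1)
        exact h1.const_mul _
      have hmul : (∑ n ∈ Finset.Icc 1 N, b n * t ^ n) * A ≤ A - 1 :=
        le_of_tendsto hlim (Filter.Eventually.of_forall fin)
      -- t^N * (partial sum of b) ≤ sum b n t^n
      have hpow : (∑ n ∈ Finset.Icc 1 N, b n) * t ^ N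
          ≤ ∑ n ∈ Finset.Icc 1 N, b n * t ^ n := by
        rw [Finset.sum_mul]
        refine Finset.sum_le_sum fun n hn => ?_
        have hnN : n ≤ N := (Finset.mem_Icc.mp hn).2
        exact mul_le_mul_of_nonneg_left
          (pow_le_pow_of_le_one ht0' ht1.le hnN) (hb n)
      have hSnonneg : 0 ≤ ∑ n ∈ Finset.Icc 1 N, b n * t ^ n :=
        Finset.sum_nonneg fun n _ => mul_nonneg (hb n) (pow_nonneg ht0' n)
      nlinarith [hmul, hpow, hA1, hSnonneg]
    -- now let t → 1⁻
    have hne : (𝓝[<] (1:ℝ)).NeBot := inferInstance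
    have hend : Filter.Tendsto (fun t : ℝ => (∑ n ∈ Finset.Icc 1 N, b n) * t ^ N)
        (𝓝[<] (1:ℝ)) (𝓝 ((∑ n ∈ Finset.Icc 1 N, b n) * 1 ^ N)) := by
      apply Filter.Tendsto.mono_left _ nhdsWithin_le_nhds
      exact (continuous_const.mul (continuous_pow N)).tendsto 1
    have hev : ∀ᶠ t in 𝓝[<] (1:ℝ), (∑ n ∈ Finset.Icc 1 N, b n) * t ^ N ≤ 1 := by
      filter_upwards [Ioo_mem_nhdsLT_of_mem (by norm_num : (1:ℝ) ∈ Set.Ioc 0 1)]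
        with t ht using step t ht
    have := le_of_tendsto hend hev
    simpa using this
  -- translate Icc-sums into range-sums over b (· + 1)
  have hrange : ∀ n : ℕ, ∑ i ∈ Finset.range n, b (i + 1) ≤ 1 := by
    intro n
    have : ∑ i ∈ Finset.range n, b (i + 1) = ∑ m ∈ Finset.Icc 1 n, b m := by
      rw [← Finset.Ico_add_one_right_eq_Icc, Finset.sum_Ico_eq_sum_range]
      simp [add_comm]
    rw [this]; exact key n
  have hsummable : Summable fun n => b (n + 1) :=
    summable_of_sum_range_le (fun n => hb (n + 1)) hrange
  exact ⟨hsummable, Real.tsum_le_of_sum_range_le (fun n => hb (n + 1)) hrange⟩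
end

section
/- Let (a_n)_{n≥0} and (b_n)_{n≥1} be sequences of nonnegative reals with a_0 = 1, a_n > 0 for all n, satisfying a_m = ∑_{n=1}^m b_n a_{m−n} for all m ≥ 1, and suppose the radius of convergence of ∑ a_n t^n is at least 1. Then ∑_{n≥1} b_n = 1 if and only if ∑_{n≥0} a_n = ∞. -/
/-!
With `A(t) = ∑ aₙ tⁿ` and `B(t) = ∑_{n≥1} bₙ tⁿ`, the convolution relation is the Cauchy-product
identity `A = 1 + B A` on `[0, 1)`, so `B = 1 - 1 / A` there. All coefficients are nonnegative, so
letting `t ↑ 1` turns this into `∑ bₙ = 1 - 1 / ∑ aₙ` with `1 / ∞ = 0`: the `bₙ` sum to `1`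
exactly when the `aₙ` are not summable.
-/

open Finset Filter Topology

theorem tsum_eq_add_tsum_mul_tsum_of_sum_range_mul {R : Type*} [NormedRing R] [CompleteSpace R]
    {f g : ℕ → R} (hf : Summable fun n => ‖f n‖) (hg : Summable fun n => ‖g n‖)
    (h : ∀ m, g (m + 1) = ∑ k ∈ range (m + 1), f k * g (m - k)) :
    ∑' n, g n = g 0 + (∑' n, f n) * ∑' n, g n := by
  have hshift : HasSum (fun n => g (n + 1)) ((∑' n, f n) * ∑' n, g n) := by
    simpa only [← h] using hasSum_sum_range_mul_of_summable_norm hf hg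
  exact hg.of_norm.tsum_eq_zero_add.trans (congrArg _ hshift.tsum_eq)

theorem sum_range_le_of_tsum_mul_pow_le {c : ℕ → ℝ} (hc : ∀ n, 0 ≤ c n) (k : ℕ) {C : ℝ}
    (hs : ∀ t ∈ Set.Ico (0 : ℝ) 1, Summable fun n => c n * t ^ (n + k))
    (hC : ∀ t ∈ Set.Ico (0 : ℝ) 1, ∑' n, c n * t ^ (n + k) ≤ C) (N : ℕ) :
    ∑ n ∈ range N, c n ≤ C := by
  have hlim : Tendsto (fun t : ℝ => ∑ n ∈ range N, c n * t ^ (n + k)) (𝓝[<] 1)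
      (𝓝 (∑ n ∈ range N, c n)) := by
    have hp : Continuous fun t : ℝ => ∑ n ∈ range N, c n * t ^ (n + k) := by fun_prop
    simpa using (hp.tendsto 1).mono_left nhdsWithin_le_nhds
  refine le_of_tendsto hlim ?_
  filter_upwards [Ioo_mem_nhdsLT zero_lt_one] with t ht
  have ht' : t ∈ Set.Ico (0 : ℝ) 1 := Set.Ioo_subset_Ico_self ht
  exact ((hs t ht').sum_le_tsum _ fun n _ => mul_nonneg (hc n) (pow_nonneg ht'.1 _)).trans
    (hC t ht')

theorem summable_mul_pow_of_summable {c : ℕ → ℝ} (hc : ∀ n, 0 ≤ c n) (hsum : Summable c)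
    {t : ℝ} (ht0 : 0 ≤ t) (ht1 : t ≤ 1) (k : ℕ) : Summable fun n => c n * t ^ (n + k) :=
  hsum.of_nonneg_of_le (fun n => mul_nonneg (hc n) (pow_nonneg ht0 _))
    fun n => mul_le_of_le_one_right (hc n) (pow_le_one₀ ht0 ht1)

theorem tsum_mul_pow_le_tsum {c : ℕ → ℝ} (hc : ∀ n, 0 ≤ c n) (hsum : Summable c) {t : ℝ}
    (ht0 : 0 ≤ t) (ht1 : t ≤ 1) (k : ℕ) : ∑' n, c n * t ^ (n + k) ≤ ∑' n, c n :=
  (summable_mul_pow_of_summable hc hsum ht0 ht1 k).tsum_le_tsum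
    (fun n => mul_le_of_le_one_right (hc n) (pow_le_one₀ ht0 ht1)) hsum

theorem eq_sum_range_of_eq_sum_Icc {R : Type*} [Semiring R] {a b : ℕ → R}
    (hconv : ∀ m : ℕ, 1 ≤ m → a m = ∑ n ∈ Icc 1 m, b n * a (m - n)) (m : ℕ) :
    a (m + 1) = ∑ k ∈ range (m + 1), b (k + 1) * a (m - k) := by
  rw [hconv (m + 1) m.succ_pos, ← Ico_add_one_right_eq_Icc, sum_Ico_eq_sum_range]
  simp only [add_comm 1, Nat.add_sub_cancel, Nat.add_sub_add_right]

/-- `apply_succ` is the renewal equation `a m = ∑_{n=1}^m b n * a (m - n)`, `m ≥ 1`, reindexed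
from `0`; the value `b 0` never enters. -/
structure IsRenewalPair (a b : ℕ → ℝ) : Prop where
  apply_zero : a 0 = 1
  nonneg_left : ∀ n, 0 ≤ a n
  nonneg_right : ∀ n, 0 ≤ b n
  apply_succ : ∀ m, a (m + 1) = ∑ k ∈ range (m + 1), b (k + 1) * a (m - k)

namespace IsRenewalPair

variable {a b : ℕ → ℝ}

theorem right_le_left (h : IsRenewalPair a b) (n : ℕ) : b (n + 1) ≤ a (n + 1) := by
  have hterm := single_le_sum
    (fun k _ => mul_nonneg (h.nonneg_right (k + 1)) (h.nonneg_left (n - k)))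
    (self_mem_range_succ n)
  rwa [Nat.sub_self, h.apply_zero, mul_one, ← h.apply_succ] at hterm

theorem one_le_tsum_mul_pow (h : IsRenewalPair a b) {t : ℝ} (ht : 0 ≤ t)
    (hA : Summable fun n => a n * t ^ n) : 1 ≤ ∑' n, a n * t ^ n := by
  simpa [h.apply_zero] using
    hA.le_tsum 0 fun n _ => mul_nonneg (h.nonneg_left n) (pow_nonneg ht n)

theorem tsum_mul_pow_succ_eq_one_sub_inv (h : IsRenewalPair a b) {t : ℝ} (ht : 0 ≤ t)
    (hA : Summable fun n => a n * t ^ n) :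
    Summable (fun n => b (n + 1) * t ^ (n + 1)) ∧
      ∑' n, b (n + 1) * t ^ (n + 1) = 1 - (∑' n, a n * t ^ n)⁻¹ := by
  have hB : Summable fun n => b (n + 1) * t ^ (n + 1) :=
    ((summable_nat_add_iff 1).mpr hA).of_nonneg_of_le
      (fun n => mul_nonneg (h.nonneg_right _) (pow_nonneg ht _))
      (fun n => mul_le_mul_of_nonneg_right (h.right_le_left n) (pow_nonneg ht _))
  have hconv : ∀ m, a (m + 1) * t ^ (m + 1) =
      ∑ k ∈ range (m + 1), b (k + 1) * t ^ (k + 1) * (a (m - k) * t ^ (m - k)) := by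
    intro m
    rw [h.apply_succ, sum_mul]
    refine sum_congr rfl fun k hk => ?_
    obtain ⟨j, rfl⟩ := Nat.exists_eq_add_of_le (Nat.lt_succ_iff.mp (mem_range.mp hk))
    rw [Nat.add_sub_cancel_left]
    ring
  have hid := tsum_eq_add_tsum_mul_tsum_of_sum_range_mul
    (f := fun n => b (n + 1) * t ^ (n + 1)) (g := fun n => a n * t ^ n)
    (summable_norm_iff.mpr hB) (summable_norm_iff.mpr hA) hconv
  have hA1 := h.one_le_tsum_mul_pow ht hA
  refine ⟨hB, ?_⟩
  simp only [h.apply_zero, pow_zero, mul_one] at hid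
  field_simp
  linarith

theorem tsum_succ_le_one_sub_inv (h : IsRenewalPair a b) (hsa : Summable a) :
    ∑' n, b (n + 1) ≤ 1 - (∑' n, a n)⁻¹ := by
  have hb n : 0 ≤ b (n + 1) := h.nonneg_right (n + 1)
  have hA t (ht : t ∈ Set.Ico (0 : ℝ) 1) : Summable fun n => a n * t ^ n :=
    summable_mul_pow_of_summable h.nonneg_left hsa ht.1 ht.2.le 0
  refine Real.tsum_le_of_sum_range_le hb <| sum_range_le_of_tsum_mul_pow_le hb 1
    (fun t ht => (h.tsum_mul_pow_succ_eq_one_sub_inv ht.1 (hA t ht)).1) fun t ht => ?_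
  rw [(h.tsum_mul_pow_succ_eq_one_sub_inv ht.1 (hA t ht)).2]
  have hA1 := h.one_le_tsum_mul_pow ht.1 (hA t ht)
  have hAle : ∑' n, a n * t ^ n ≤ ∑' n, a n :=
    tsum_mul_pow_le_tsum h.nonneg_left hsa ht.1 ht.2.le 0
  exact sub_le_sub_left (inv_anti₀ (by linarith) hAle) 1

theorem tsum_succ_le_one (h : IsRenewalPair a b)
    (hA : ∀ t ∈ Set.Ico (0 : ℝ) 1, Summable fun n => a n * t ^ n) :
    Summable (fun n => b (n + 1)) ∧ ∑' n, b (n + 1) ≤ 1 := by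
  have hb n : 0 ≤ b (n + 1) := h.nonneg_right (n + 1)
  have hbound := sum_range_le_of_tsum_mul_pow_le hb 1
    (fun t ht => (h.tsum_mul_pow_succ_eq_one_sub_inv ht.1 (hA t ht)).1) (C := 1) fun t ht => by
      rw [(h.tsum_mul_pow_succ_eq_one_sub_inv ht.1 (hA t ht)).2]
      linarith [inv_nonneg.mpr (zero_le_one.trans (h.one_le_tsum_mul_pow ht.1 (hA t ht)))]
  exact ⟨summable_of_sum_range_le hb hbound, Real.tsum_le_of_sum_range_le hb hbound⟩

theorem summable_of_tsum_succ_lt_one (h : IsRenewalPair a b)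
    (hA : ∀ t ∈ Set.Ico (0 : ℝ) 1, Summable fun n => a n * t ^ n)
    (hlt : ∑' n, b (n + 1) < 1) : Summable a := by
  refine summable_of_sum_range_le h.nonneg_left (sum_range_le_of_tsum_mul_pow_le h.nonneg_left 0
    hA (C := (1 - ∑' n, b (n + 1))⁻¹) fun t ht => ?_)
  have hB := h.tsum_mul_pow_succ_eq_one_sub_inv ht.1 (hA t ht)
  have hBle := tsum_mul_pow_le_tsum (fun n => h.nonneg_right (n + 1)) (h.tsum_succ_le_one hA).1
    ht.1 ht.2.le 1
  have hAB : ∑' n, a n * t ^ n = (1 - ∑' n, b (n + 1) * t ^ (n + 1))⁻¹ := by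
    rw [hB.2, sub_sub_cancel, inv_inv]
  simp only [add_zero, hAB]
  exact inv_anti₀ (by linarith) (by linarith)

end IsRenewalPair

/-- With `a₀ = 1`, `aₙ > 0`, `bₙ ≥ 0`, the convolution relation
`aₘ = ∑_{n=1}^m bₙ a_{m-n}` for all `m ≥ 1`, and radius of convergence of
`∑ aₙ tⁿ` at least `1`, one has `∑_{n≥1} bₙ = 1` if and only if `∑ aₙ = ∞`. -/
theorem stmt_2 (a b : ℕ → ℝ) (ha0 : a 0 = 1) (hapos : ∀ n, 0 < a n) (hb : ∀ n, 0 ≤ b n)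
    (hconv : ∀ m : ℕ, 1 ≤ m → a m = ∑ n ∈ Finset.Icc 1 m, b n * a (m - n))
    (hradius : ∀ t : ℝ, 0 ≤ t → t < 1 → Summable fun n => a n * t ^ n) :
    (∑' n : ℕ, b (n + 1)) = 1 ↔ ¬ Summable a := by
  have h : IsRenewalPair a b :=
    ⟨ha0, fun n => (hapos n).le, hb, eq_sum_range_of_eq_sum_Icc hconv⟩
  have hA : ∀ t ∈ Set.Ico (0 : ℝ) 1, Summable fun n => a n * t ^ n :=
    fun t ht => hradius t ht.1 ht.2
  constructor
  · intro hsum hsa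
    have hle := h.tsum_succ_le_one_sub_inv hsa
    have hpos : 0 < (∑' n, a n)⁻¹ := inv_pos.mpr (hsa.tsum_pos h.nonneg_left 0 (hapos 0))
    linarith
  · intro hna
    exact (h.tsum_succ_le_one hA).2.antisymm
      (not_lt.mp fun hlt => hna (h.summable_of_tsum_succ_lt_one hA hlt))
end

section
/- Let (b_n)_{n≥1} be a sequence of nonnegative reals and suppose that for some real r > 1 one has ∑_{n≥1} b_n r^n ≤ 1. If (a_n)_{n≥0} is a sequence with a_0 = 1 satisfying the convolution relation a_m = ∑_{n=1}^m b_n a_{m−n} for all m ≥ 1, then the power series ∑_{n≥0} a_n t^n has radius of convergence strictly greater than 1. -/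
set_option maxHeartbeats 1000000 in
/-- If `bₙ ≥ 0` with `∑_{n≥1} bₙ rⁿ ≤ 1` for some `r > 1`, and `a₀ = 1` with
`aₘ = ∑_{n=1}^m bₙ a_{m-n}` for all `m ≥ 1`, then the power series `∑ aₙ tⁿ`
has radius of convergence strictly greater than `1`. -/
theorem stmt_3 (a b : ℕ → ℝ) (hb : ∀ n, 0 ≤ b n) (r : ℝ) (hr : 1 < r)
    (hbsum : Summable fun n => b (n + 1) * r ^ (n + 1))
    (hble : ∑' n : ℕ, b (n + 1) * r ^ (n + 1) ≤ 1)
    (ha0 : a 0 = 1)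
    (hconv : ∀ m : ℕ, 1 ≤ m → a m = ∑ n ∈ Finset.Icc 1 m, b n * a (m - n)) :
    ∃ R : ℝ, 1 < R ∧ ∀ t : ℝ, |t| < R → Summable fun n => a n * t ^ n := by
  have hr0 : (0:ℝ) < r := lt_trans one_pos hr
  -- partial sums of b n r^n are ≤ 1
  have hpart : ∀ m : ℕ, ∑ n ∈ Finset.Icc 1 m, b n * r ^ n ≤ 1 := by
    intro m
    have h1 : ∑ n ∈ Finset.Icc 1 m, b n * r ^ n
        = ∑ n ∈ Finset.range m, b (n + 1) * r ^ (n + 1) := by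
      induction m with
      | zero => simp
      | succ k ihk =>
          rw [Finset.sum_range_succ, ← ihk, Finset.sum_Icc_succ_top (by omega)]
    rw [h1]
    exact le_trans (Summable.sum_le_tsum (Finset.range m) (fun i _ => mul_nonneg (hb _)
      (pow_nonneg (le_of_lt hr0) _)) hbsum) hble
  -- the key estimate by strong induction
  have key : ∀ m : ℕ, 0 ≤ a m ∧ a m * r ^ m ≤ 1 := by
    intro m
    induction m using Nat.strong_induction_on with
    | _ m ih =>
      rcases Nat.eq_zero_or_pos m with hm | hm
      · subst hm; simp [ha0]
      · have hc := hconv m hm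
        have hterm : ∀ n ∈ Finset.Icc 1 m, 0 ≤ b n * a (m - n) := by
          intro n hn
          simp only [Finset.mem_Icc] at hn
          exact mul_nonneg (hb n) (ih (m - n) (by omega)).1
        constructor
        · rw [hc]; exact Finset.sum_nonneg hterm
        · rw [hc, Finset.sum_mul]
          calc ∑ n ∈ Finset.Icc 1 m, b n * a (m - n) * r ^ m
              ≤ ∑ n ∈ Finset.Icc 1 m, b n * r ^ n := by
                apply Finset.sum_le_sum
                intro n hn
                simp only [Finset.mem_Icc] at hn
                have hrm : r ^ m = r ^ n * r ^ (m - n) := by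
                  rw [← pow_add]; congr 1; omega
                rw [hrm]
                have : b n * a (m - n) * (r ^ n * r ^ (m - n))
                    = (b n * r ^ n) * (a (m - n) * r ^ (m - n)) := by ring
                rw [this]
                have h1 : a (m - n) * r ^ (m - n) ≤ 1 := (ih (m - n) (by omega)).2
                have h2 : 0 ≤ b n * r ^ n := mul_nonneg (hb n) (pow_nonneg hr0.le _)
                calc (b n * r ^ n) * (a (m - n) * r ^ (m - n))
                    ≤ (b n * r ^ n) * 1 := by
                      apply mul_le_mul_of_nonneg_left h1 h2
                  _ = b n * r ^ n := mul_one _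
            _ ≤ 1 := hpart m
  refine ⟨r, hr, fun t ht => ?_⟩
  apply Summable.of_abs
  have hq : |t| / r < 1 := (div_lt_one hr0).2 ht
  have hq0 : 0 ≤ |t| / r := div_nonneg (abs_nonneg t) hr0.le
  refine Summable.of_nonneg_of_le (fun n => abs_nonneg _) (fun n => ?_)
    (summable_geometric_of_lt_one hq0 hq)
  rw [abs_mul, abs_pow, abs_of_nonneg (key n).1, div_pow, le_div_iff₀ (pow_pos hr0 n)]
  calc a n * |t| ^ n * r ^ n = (a n * r ^ n) * |t| ^ n := by ring
    _ ≤ 1 * |t| ^ n :=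
        mul_le_mul_of_nonneg_right (key n).2 (pow_nonneg (abs_nonneg t) n)
    _ = |t| ^ n := one_mul _
end

section
/- Let B be a unital C*-algebra, let π : B → B(L) be a unital *-representation, let H ⊆ L be a closed subspace with orthogonal projection P_H, and define ψ : B → B(H) by ψ(x) = P_H π(x)|_H. Then for T ∈ B, one has ψ(T T*) = ψ(T) ψ(T)* if and only if H is invariant under π(T)* (i.e., π(T)*(H) ⊆ H). -/
/-!
For `u ∈ H` one has `⟪ψ(T T*) u, u⟫ = ‖π(T)* u‖²` and `⟪ψ(T) ψ(T)* u, u⟫ = ‖P_H π(T)* u‖²`,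
so the equality forces `P_H` to preserve the norm of `π(T)* u`, i.e. `π(T)* u ∈ H`.
Conversely, if `π(T)*` maps `H` into `H`, then compressing `π(T) π(T)*` to `H` is the product
of the compressions, and the compression of `π(T)*` is `ψ(T)*`.
-/

open scoped InnerProductSpace
open ContinuousLinearMap RCLike

theorem ContinuousLinearMap.norm_sq_star_apply {𝕜 E : Type*} [RCLike 𝕜] [NormedAddCommGroup E]
    [InnerProductSpace 𝕜 E] [CompleteSpace E] (A : E →L[𝕜] E) (x : E) :
    ‖star A x‖ ^ 2 = re ⟪(A * star A) x, x⟫_𝕜 := by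
  rw [apply_norm_sq_eq_inner_adjoint_left, star_eq_adjoint, adjoint_adjoint]
  rfl

namespace Submodule

variable {𝕜 E : Type*} [RCLike 𝕜] [NormedAddCommGroup E] [InnerProductSpace 𝕜 E]

section HasOrthogonalProjection

variable (K : Submodule 𝕜 E) [K.HasOrthogonalProjection]

noncomputable def compression (A : E →L[𝕜] E) : K →L[𝕜] K :=
  K.orthogonalProjectionOnto ∘L A ∘L K.subtypeL

theorem coe_compression_apply (A : E →L[𝕜] E) (u : K) :
    (K.compression A u : E) = K.starProjection (A u) :=
  rfl

theorem inner_compression_apply (A : E →L[𝕜] E) (u v : K) :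
    ⟪K.compression A u, v⟫_𝕜 = ⟪A u, v⟫_𝕜 := by
  simp [compression]

theorem compression_mul_of_mapsTo {A B : E →L[𝕜] E} (hB : ∀ x ∈ K, B x ∈ K) :
    K.compression (A * B) = K.compression A * K.compression B := by
  ext u
  simp [coe_compression_apply, starProjection_eq_self_iff.mpr (hB u u.2)]

end HasOrthogonalProjection

variable [CompleteSpace E] (K : Submodule 𝕜 E) [CompleteSpace K]

theorem star_compression (A : E →L[𝕜] E) : star (K.compression A) = K.compression (star A) := by
  simp only [compression, star_eq_adjoint, adjoint_comp, adjoint_subtypeL,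
    adjoint_orthogonalProjectionOnto, comp_assoc]

theorem compression_mul_star_self_eq_iff (A : E →L[𝕜] E) :
    K.compression (A * star A) = K.compression A * star (K.compression A) ↔
      ∀ x ∈ K, star A x ∈ K := by
  refine ⟨fun h x hx => ?_, fun h => by rw [star_compression, compression_mul_of_mapsTo K h]⟩
  have key : ‖star A x‖ ^ 2 = ‖K.starProjection (star A x)‖ ^ 2 := calc
    ‖star A x‖ ^ 2 = re ⟪K.compression (A * star A) ⟨x, hx⟩, ⟨x, hx⟩⟫_𝕜 := by
      rw [norm_sq_star_apply, inner_compression_apply]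
    _ = ‖star (K.compression A) ⟨x, hx⟩‖ ^ 2 := by rw [h, norm_sq_star_apply]
    _ = ‖K.starProjection (star A x)‖ ^ 2 := by
      rw [star_compression, ← norm_coe, coe_compression_apply]
  rw [mem_iff_norm_starProjection]
  exact ((pow_left_inj₀ (norm_nonneg _) (norm_nonneg _) two_ne_zero).mp key).symm

end Submodule

theorem stmt_6_general {B : Type*} [NormedRing B] [StarRing B] [NormedAlgebra ℂ B]
    {L : Type*} [NormedAddCommGroup L] [InnerProductSpace ℂ L] [CompleteSpace L]
    (π : B →⋆ₐ[ℂ] (L →L[ℂ] L))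
    (K : Submodule ℂ L) [CompleteSpace K]
    (ψ : B → (K →L[ℂ] K))
    (hψ : ∀ x : B, ψ x = K.orthogonalProjectionOnto.comp ((π x).comp K.subtypeL))
    (T : B) :
    ψ (T * star T) = ψ T * star (ψ T) ↔ ∀ x ∈ K, (star (π T)) x ∈ K := by
  obtain rfl : ψ = fun x => K.compression (π x) := funext hψ
  simp only [map_mul, map_star]
  exact K.compression_mul_star_self_eq_iff (π T)

/-- Agler's lemma: if `π : B → B(L)` is a unital `*`-representation of a unital
C*-algebra, `H ⊆ L` a closed subspace, and `ψ(x) = P_H π(x)|_H` is the compression,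
then for `T ∈ B` one has `ψ(T T*) = ψ(T) ψ(T)*` iff `H` is invariant under `π(T)*`. -/
theorem stmt_6 {B : Type*} [NormedRing B] [StarRing B] [CStarRing B] [NormedAlgebra ℂ B]
    [CompleteSpace B]
    {L : Type*} [NormedAddCommGroup L] [InnerProductSpace ℂ L] [CompleteSpace L]
    (π : B →⋆ₐ[ℂ] (L →L[ℂ] L))
    (K : Submodule ℂ L) [CompleteSpace K]
    (ψ : B → (K →L[ℂ] K))
    (hψ : ∀ x : B, ψ x = K.orthogonalProjectionOnto.comp ((π x).comp K.subtypeL))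
    (T : B) :
    ψ (T * star T) = ψ T * star (ψ T) ↔ ∀ x ∈ K, (star (π T)) x ∈ K :=
  stmt_6_general π K ψ hψ T
end

section
/- Let T = (T_1,…,T_d) be a commuting tuple of bounded operators on a Hilbert space H such that T^α = 0 for every multi-index α with |α| = N+1, let U = (U_1,…,U_d) be a commuting tuple of normal operators on a Hilbert space L with ∑_{j=1}^d U_j U_j* = I, and let V : H → L be a bounded operator with V* U_j = T_j V* for all j. Then V = 0. -/
section aux

variable {M : Type*} [Monoid M]

private lemma sum_count_eq_length {d : ℕ} (l : List (Fin d)) :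
    ∑ j : Fin d, l.count j = l.length := by
  induction l with
  | nil => simp
  | cons a l ih =>
    simp only [List.count_cons, List.length_cons, Finset.sum_add_distrib, ih]
    simp [Finset.sum_ite_eq, add_comm]

private lemma word_prod_eq_monomial {d k : ℕ} (f : Fin d → M)
    (hf : ∀ i j, Commute (f i) (f j)) (w : Fin k → Fin d) :
    (List.ofFn fun i => f (w i)).prod
      = (List.ofFn fun j => f j ^ (List.ofFn w).count j).prod := by
  have h1 : (List.ofFn fun i => f (w i)) = List.map f (List.ofFn w) := by
    rw [List.map_ofFn]; rfl
  have hperm : List.Perm (List.ofFn w)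
      (List.ofFn fun j : Fin d => List.replicate ((List.ofFn w).count j) j).flatten := by
    rw [List.perm_iff_count]
    intro a
    rw [List.count_flatten, List.map_ofFn, List.sum_ofFn]
    have h2 : ∀ j : Fin d,
        ((List.count a) ∘ fun j : Fin d => List.replicate ((List.ofFn w).count j) j) j
        = if j = a then (List.ofFn w).count j else 0 := by
      intro j; simp [List.count_replicate]
    rw [Finset.sum_congr rfl fun j (_ : j ∈ Finset.univ) => h2 j]
    simp
  have hpair : (List.map f (List.ofFn w)).Pairwise Commute := by
    apply List.pairwise_of_forall_mem_list
    intro x hx y hy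
    obtain ⟨i, _, rfl⟩ := List.mem_map.1 hx
    obtain ⟨j, _, rfl⟩ := List.mem_map.1 hy
    exact hf i j
  rw [h1, (hperm.map f).prod_eq' hpair, List.map_flatten, List.map_ofFn,
    List.prod_flatten, List.map_ofFn]
  simp [Function.comp_def, List.map_replicate, List.prod_replicate]

end aux

/-- If `T` is a commuting tuple with `Tᵅ = 0` for all `|α| = N+1`, `U` is a spherical
unitary (commuting normals with `∑ Uⱼ Uⱼ* = 1`), and `V* Uⱼ = Tⱼ V*` for all `j`,
then `V = 0`. -/
theorem stmt_10 {H L : Type*}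
    [NormedAddCommGroup H] [InnerProductSpace ℂ H] [CompleteSpace H]
    [NormedAddCommGroup L] [InnerProductSpace ℂ L] [CompleteSpace L]
    {d N : ℕ} (T : Fin d → (H →L[ℂ] H)) (hTcomm : ∀ i j, Commute (T i) (T j))
    (hTnil : ∀ α : Fin d → ℕ, (∑ j, α j) = N + 1 →
      (List.ofFn fun j => T j ^ α j).prod = 0)
    (U : Fin d → (L →L[ℂ] L)) (hUcomm : ∀ i j, Commute (U i) (U j))
    (hUnormal : ∀ j, IsStarNormal (U j))
    (hUsum : ∑ j, U j * star (U j) = 1)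
    (V : H →L[ℂ] L)
    (hV : ∀ j, (ContinuousLinearMap.adjoint V).comp (U j)
      = (T j).comp (ContinuousLinearMap.adjoint V)) :
    V = 0 := by
  set Vs := ContinuousLinearMap.adjoint V with hVs
  have key1 : ∀ (k : ℕ), ∑ w : Fin k → Fin d,
      (List.ofFn fun i => U (w i)).prod * star (List.ofFn fun i => U (w i)).prod = 1 := by
    intro k
    induction k with
    | zero => simp
    | succ k ih =>
      rw [← (Fin.consEquiv (fun _ : Fin (k + 1) => Fin d)).sum_comp]
      rw [Fintype.sum_prod_type]
      have hcons : ∀ (j : Fin d) (w : Fin k → Fin d),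
          (List.ofFn fun i => U ((Fin.consEquiv (fun _ => Fin d)) (j, w) i)).prod
          = U j * (List.ofFn fun i => U (w i)).prod := by
        intro j w
        simp [Fin.consEquiv, List.ofFn_succ, Function.comp]
      calc ∑ j : Fin d, ∑ w : Fin k → Fin d,
            (List.ofFn fun i => U ((Fin.consEquiv (fun _ => Fin d)) (j, w) i)).prod *
              star (List.ofFn fun i => U ((Fin.consEquiv (fun _ => Fin d)) (j, w) i)).prod
          = ∑ j : Fin d, ∑ w : Fin k → Fin d,
              U j * ((List.ofFn fun i => U (w i)).prod *
                star (List.ofFn fun i => U (w i)).prod) * star (U j) := by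
            refine Finset.sum_congr rfl fun j _ => Finset.sum_congr rfl fun w _ => ?_
            rw [hcons j w, star_mul]
            simp [mul_assoc]
        _ = ∑ j : Fin d, U j * (∑ w : Fin k → Fin d,
              (List.ofFn fun i => U (w i)).prod *
                star (List.ofFn fun i => U (w i)).prod) * star (U j) := by
            refine Finset.sum_congr rfl fun j _ => ?_
            rw [← Finset.sum_mul, ← Finset.mul_sum]
        _ = 1 := by rw [ih]; simpa using hUsum
  have key2 : ∀ (k : ℕ) (w : Fin k → Fin d),
      Vs.comp (List.ofFn fun i => U (w i)).prod
        = ((List.ofFn fun i => T (w i)).prod).comp Vs := by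
    intro k
    induction k with
    | zero =>
      intro w
      simp [ContinuousLinearMap.one_def]
    | succ k ih =>
      intro w
      rw [List.ofFn_succ, List.ofFn_succ, List.prod_cons, List.prod_cons]
      rw [ContinuousLinearMap.mul_def, ContinuousLinearMap.mul_def,
        ← ContinuousLinearMap.comp_assoc, hV (w 0), ContinuousLinearMap.comp_assoc,
        ih (fun i => w i.succ), ← ContinuousLinearMap.comp_assoc]
  have key3 : ∀ w : Fin (N + 1) → Fin d, (List.ofFn fun i => T (w i)).prod = 0 := by
    intro w
    rw [word_prod_eq_monomial T hTcomm w]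
    exact hTnil _ (by rw [sum_count_eq_length]; simp)
  have hVs0 : Vs = 0 := by
    have h1 := key1 (N + 1)
    calc Vs = Vs.comp (1 : L →L[ℂ] L) := by
          ext x; simp
      _ = 0 := by
          rw [← h1]
          ext x
          simp only [ContinuousLinearMap.comp_apply, ContinuousLinearMap.sum_apply,
            ContinuousLinearMap.zero_apply, map_sum]
          refine Finset.sum_eq_zero fun w _ => ?_
          rw [ContinuousLinearMap.mul_apply, ← ContinuousLinearMap.comp_apply, key2 _ w,
            ContinuousLinearMap.comp_apply, key3 w]
          simp
  calc V = ContinuousLinearMap.adjoint Vs := by rw [hVs, ContinuousLinearMap.adjoint_adjoint]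
    _ = 0 := by rw [hVs0]; simp
end

section
/- Let (a_n)_{n≥0} and (b_n)_{n≥1} be nonnegative sequences with a_0 = 1, satisfying a_m = ∑_{n=1}^m b_n a_{m−n} for all m ≥ 1 and ∑_{n≥1} b_n ≤ 1. If a_1 ≥ 1, then b_1 = 1, b_n = 0 for all n ≥ 2, and a_n = 1 for all n ≥ 0. -/
/-- If `a₀ = 1`, `aₙ, bₙ ≥ 0`, the convolution relation `aₘ = ∑_{n=1}^m bₙ a_{m-n}`
holds for all `m ≥ 1`, `∑_{n≥1} bₙ ≤ 1`, and `a₁ ≥ 1`, then `b₁ = 1`, `bₙ = 0` for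
`n ≥ 2`, and `aₙ = 1` for all `n`. -/
theorem stmt_13 (a b : ℕ → ℝ) (ha0 : a 0 = 1) (ha : ∀ n, 0 ≤ a n) (hb : ∀ n, 0 ≤ b n)
    (hconv : ∀ m : ℕ, 1 ≤ m → a m = ∑ n ∈ Finset.Icc 1 m, b n * a (m - n))
    (hbsum : Summable fun n => b (n + 1)) (hble : ∑' n : ℕ, b (n + 1) ≤ 1)
    (ha1 : 1 ≤ a 1) :
    b 1 = 1 ∧ (∀ n, 2 ≤ n → b n = 0) ∧ ∀ n, a n = 1 := by
  have ha1b : a 1 = b 1 := by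
    have := hconv 1 le_rfl
    simpa [ha0] using this
  have hb1le : b 1 ≤ ∑' n : ℕ, b (n + 1) :=
    Summable.le_tsum hbsum 0 (fun i _ => hb _)
  have hb1 : b 1 = 1 := le_antisymm (hb1le.trans hble) (by linarith [ha1, ha1b])
  have hbz : ∀ n, 2 ≤ n → b n = 0 := by
    intro n hn
    have hsum : ∑ i ∈ ({0, n - 1} : Finset ℕ), b (i + 1) ≤ ∑' n : ℕ, b (n + 1) :=
      Summable.sum_le_tsum _ (fun i _ => hb _) hbsum
    have hne : (0 : ℕ) ≠ n - 1 := by omega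
    rw [Finset.sum_pair hne] at hsum
    have : n - 1 + 1 = n := by omega
    rw [this] at hsum
    have := hb n
    linarith
  refine ⟨hb1, hbz, ?_⟩
  intro n
  induction n using Nat.strong_induction_on with
  | _ n ih =>
    match n with
    | 0 => exact ha0
    | (m + 1) =>
      rw [hconv (m + 1) (by omega)]
      have : ∀ k ∈ Finset.Icc 1 (m + 1), b k * a (m + 1 - k) =
          if k = 1 then 1 else 0 := by
        intro k hk
        rcases eq_or_ne k 1 with h | h
        · subst h
          simp [hb1, ih m (by omega)]
        · have : b k = 0 := hbz k (by simp at hk; omega)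
          simp [this, h]
      rw [Finset.sum_congr rfl this]
      simp
end

section
/- Let (a_n)_{n≥0} be positive reals with a_0 = 1, and on the space of polynomials ℂ[z_1,…,z_d] with inner product ⟨z^α, z^β⟩ = δ_{αβ}(1/a_{|α|})(α!/|α|!), let M_{z_j} denote multiplication by z_j. Then for every homogeneous polynomial p of degree m ≥ n, ∑_{|α|=n} (n!/α!) M_z^α (M_z*)^α p = (a_{m−n}/a_m) · p, where M_z^α = M_{z_1}^{α_1}⋯M_{z_d}^{α_d} and the adjoint is taken with respect to the given inner product restricted to polynomials of degree ≤ some fixed N ≥ m. -/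
/-- The unitarily invariant inner product on polynomials determined by
`⟨zᵅ, zᵝ⟩ = δ_{αβ} (1/a_{|α|}) α!/|α|!` (conjugate-linear in the first argument). -/
noncomputable def uiInner (d : ℕ) (a : ℕ → ℝ) (p q : MvPolynomial (Fin d) ℂ) : ℂ :=
  ∑ α ∈ p.support ∪ q.support,
    (starRingEnd ℂ) (MvPolynomial.coeff α p) * MvPolynomial.coeff α q *
      ((((∏ j, Nat.factorial (α j) : ℕ) : ℝ) / (Nat.factorial (∑ j, α j)) / a (∑ j, α j) : ℝ) : ℂ)

/-!
Testing the adjointness relation against monomials shows that `A j` is a weighted backward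
shift: `A j zᵝ = (‖zᵝ‖² / ‖z^{β - e_j}‖²) z^{β - e_j}` (and `0` if `β_j = 0`). Hence
`(M_z*)^α zᵝ = (‖zᵝ‖² / ‖z^{β-α}‖²) z^{β-α}`, so every term of the sum is a multiple of `zᵝ`.
For `|β| = m`, `|α| = n` the factor `(n!/α!) ‖zᵝ‖² / ‖z^{β-α}‖²` equals
`∏ C(β_j, α_j) / C(m, n) · a_{m-n} / a_m`, and Vandermonde's identity
`∑_{|α| = n} ∏ C(β_j, α_j) = C(m, n)` collapses the sum to `a_{m-n} / a_m`.
-/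

open MvPolynomial Finset

theorem Finset.sum_piAntidiag_prod_choose {ι : Type*} [DecidableEq ι] (s : Finset ι) (β : ι → ℕ)
    (n : ℕ) : ∑ α ∈ s.piAntidiag n, ∏ j ∈ s, (β j).choose (α j) = (∑ j ∈ s, β j).choose n := by
  let φ := Polynomial.coeToPowerSeries.ringHom (R := ℕ)
  have h := PowerSeries.coeff_prod (fun j => φ ((1 + Polynomial.X) ^ β j)) n s
  rw [← map_prod, prod_pow_eq_pow_sum] at h
  simp only [φ, Polynomial.coeToPowerSeries.ringHom_apply, Polynomial.coeff_coe,
    Polynomial.coeff_one_add_X_pow, Nat.cast_id] at h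
  rw [h, finsuppAntidiag, sum_map]
  exact (sum_attach _ fun (f : ι → ℕ) => ∏ j ∈ s, (β j).choose (f j)).symm

theorem MvPolynomial.prod_X_pow_eq_monomial_equivFunOnFinite_symm {σ R : Type*} [Fintype σ]
    [CommSemiring R] (α : σ → ℕ) :
    ∏ j, (X j : MvPolynomial σ R) ^ α j = monomial (Finsupp.equivFunOnFinite.symm α) 1 := by
  rw [monomial_eq, C_1, one_mul, Finsupp.prod_fintype _ _ fun _ => pow_zero _]
  rfl

theorem MvPolynomial.IsHomogeneous.linearMap_apply_eq_smul {σ R : Type*} [CommSemiring R]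
    {L : MvPolynomial σ R →ₗ[R] MvPolynomial σ R} {r : R} {m : ℕ}
    (hL : ∀ β c, β.degree = m → L (monomial β c) = r • monomial β c)
    {p : MvPolynomial σ R} (hp : p.IsHomogeneous m) : L p = r • p := by
  calc L p = ∑ β ∈ p.support, L (monomial β (coeff β p)) := by
        rw [← map_sum, support_sum_monomial_coeff]
    _ = ∑ β ∈ p.support, r • monomial β (coeff β p) := by
        refine sum_congr rfl fun β hβ => hL β _ ?_
        rw [Finsupp.degree_eq_weight_one]
        exact hp (mem_support_iff.mp hβ)
    _ = r • p := by rw [← smul_sum, support_sum_monomial_coeff]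

section WeightedBackwardShift

variable {σ : Type*} {w : (σ →₀ ℕ) → ℝ}

variable (w) in
def IsWeightedBackwardShift (γ : σ →₀ ℕ) (T : Module.End ℂ (MvPolynomial σ ℂ)) : Prop :=
  ∀ β c, T (monomial β c) =
    if γ ≤ β then ((w β / w (β - γ) : ℝ) : ℂ) • monomial (β - γ) c else 0

theorem isWeightedBackwardShift_one (hw : ∀ β, w β ≠ 0) : IsWeightedBackwardShift w 0 1 := by
  intro β c
  simp [div_self (hw β)]

theorem IsWeightedBackwardShift.mul (hw : ∀ β, w β ≠ 0) {γ δ : σ →₀ ℕ}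
    {T S : Module.End ℂ (MvPolynomial σ ℂ)} (hT : IsWeightedBackwardShift w γ T)
    (hS : IsWeightedBackwardShift w δ S) : IsWeightedBackwardShift w (γ + δ) (T * S) := by
  intro β c
  rw [Module.End.mul_apply, hS]
  by_cases hδ : δ ≤ β
  · rw [if_pos hδ, map_smul, hT]
    simp only [← le_tsub_iff_right hδ]
    split_ifs with hγ
    · rw [smul_smul, tsub_tsub, add_comm δ, ← Complex.ofReal_mul, div_mul_div_cancel₀ (hw _)]
    · rw [smul_zero]
  · rw [if_neg hδ, map_zero, if_neg fun h => hδ (le_trans le_add_self h)]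

theorem IsWeightedBackwardShift.pow (hw : ∀ β, w β ≠ 0) {γ : σ →₀ ℕ}
    {T : Module.End ℂ (MvPolynomial σ ℂ)} (hT : IsWeightedBackwardShift w γ T) (k : ℕ) :
    IsWeightedBackwardShift w (k • γ) (T ^ k) := by
  induction k with
  | zero => simpa using isWeightedBackwardShift_one hw
  | succ k ih => rw [pow_succ, succ_nsmul]; exact ih.mul hw hT

theorem IsWeightedBackwardShift.list_prod_ofFn (hw : ∀ β, w β ≠ 0) {n : ℕ} {γ : Fin n → σ →₀ ℕ}
    {T : Fin n → Module.End ℂ (MvPolynomial σ ℂ)}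
    (hT : ∀ i, IsWeightedBackwardShift w (γ i) (T i)) :
    IsWeightedBackwardShift w (∑ i, γ i) (List.ofFn T).prod := by
  induction n with
  | zero => simpa using isWeightedBackwardShift_one hw
  | succ n ih =>
    rw [List.ofFn_succ, List.prod_cons, Fin.sum_univ_succ]
    exact (hT 0).mul hw (ih fun i => hT i.succ)

theorem IsWeightedBackwardShift.monomial_mul_apply {γ : σ →₀ ℕ}
    {T : Module.End ℂ (MvPolynomial σ ℂ)} (hT : IsWeightedBackwardShift w γ T) (β c) :
    monomial γ 1 * T (monomial β c) =
      if γ ≤ β then ((w β / w (β - γ) : ℝ) : ℂ) • monomial β c else 0 := by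
  rw [hT]
  split_ifs with h
  · rw [mul_smul_comm, monomial_mul, one_mul, add_tsub_cancel_of_le h]
  · rw [mul_zero]

end WeightedBackwardShift

section UnitarilyInvariant

variable {d : ℕ} {a : ℕ → ℝ}

variable (a) in
/-- `‖zᵅ‖²` for the inner product `uiInner d a`. -/
noncomputable def uiWeight (α : Fin d →₀ ℕ) : ℝ :=
  ((∏ j, Nat.factorial (α j) : ℕ) : ℝ) / (Nat.factorial (∑ j, α j)) / a (∑ j, α j)

theorem uiWeight_pos (hap : ∀ k, 0 < a k) (α : Fin d →₀ ℕ) : 0 < uiWeight a α := by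
  unfold uiWeight
  have := hap (∑ j, α j)
  positivity

theorem uiInner_monomial_one_right (p : MvPolynomial (Fin d) ℂ) (γ : Fin d →₀ ℕ) :
    uiInner d a p (monomial γ 1) = starRingEnd ℂ (coeff γ p) * (uiWeight a γ : ℂ) := by
  rw [uiInner, sum_eq_single_of_mem γ (by simp [support_monomial])]
  · simp [coeff_monomial, uiWeight]
  · intro β _ hβ
    simp [coeff_monomial, Ne.symm hβ]

theorem ext_uiInner_monomial_one_right (hap : ∀ k, 0 < a k) {p q : MvPolynomial (Fin d) ℂ}
    (h : ∀ γ, uiInner d a p (monomial γ 1) = uiInner d a q (monomial γ 1)) : p = q := by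
  ext γ
  have hγ := h γ
  rw [uiInner_monomial_one_right, uiInner_monomial_one_right] at hγ
  exact (starRingEnd ℂ).injective <|
    mul_right_cancel₀ (Complex.ofReal_ne_zero.mpr (uiWeight_pos hap γ).ne') hγ

theorem isWeightedBackwardShift_of_uiInner_adjoint (hap : ∀ k, 0 < a k) {j : Fin d}
    {T : Module.End ℂ (MvPolynomial (Fin d) ℂ)}
    (hT : ∀ p q, uiInner d a (T p) q = uiInner d a p (X j * q)) :
    IsWeightedBackwardShift (uiWeight a) (Finsupp.single j 1) T := by
  intro β c
  refine ext_uiInner_monomial_one_right hap fun γ => ?_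
  rw [hT, X, monomial_mul, one_mul, uiInner_monomial_one_right, uiInner_monomial_one_right]
  by_cases hj : Finsupp.single j 1 ≤ β
  · obtain ⟨δ, rfl⟩ := exists_add_of_le hj
    rw [if_pos hj, add_tsub_cancel_left, coeff_smul, coeff_monomial, coeff_monomial]
    simp only [add_right_inj]
    split_ifs with hδ
    · subst hδ
      have hw : (uiWeight a δ : ℂ) ≠ 0 := Complex.ofReal_ne_zero.mpr (uiWeight_pos hap δ).ne'
      rw [smul_eq_mul, map_mul, Complex.conj_ofReal, Complex.ofReal_div]
      field_simp
    · simp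
  · rw [if_neg hj, coeff_monomial, if_neg fun (h : β = _) => hj (h ▸ le_self_add)]
    simp

theorem multinomial_mul_uiWeight_div (hap : ∀ k, 0 < a k) {β γ : Fin d →₀ ℕ} (h : γ ≤ β) :
    (Nat.multinomial univ γ : ℝ) * (uiWeight a β / uiWeight a (β - γ)) =
      (∏ j, ((β j).choose (γ j) : ℝ)) / (∑ j, β j).choose (∑ j, γ j) *
        (a (∑ j, β j - ∑ j, γ j) / a (∑ j, β j)) := by
  have hle : ∀ j, γ j ≤ β j := fun j => h j
  have hnm : ∑ j, γ j ≤ ∑ j, β j := sum_le_sum fun j _ => hle j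
  have hsub : ∑ j, (β - γ) j = ∑ j, β j - ∑ j, γ j := sum_tsub_distrib _ fun j _ => hle j
  have hfact : Nat.multinomial univ γ * ∏ j, (β j).factorial =
      (∑ j, γ j).factorial * ((∏ j, (β j).choose (γ j)) * ∏ j, ((β - γ) j).factorial) := by
    calc Nat.multinomial univ γ * ∏ j, (β j).factorial
        = Nat.multinomial univ γ *
            ∏ j, ((β j).choose (γ j) * (γ j).factorial * ((β - γ) j).factorial) :=
          congrArg _ <| prod_congr rfl fun j _ =>
            (Nat.choose_mul_factorial_mul_factorial (hle j)).symm
      _ = ((∏ j, (γ j).factorial) * Nat.multinomial univ γ) *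
            ((∏ j, (β j).choose (γ j)) * ∏ j, ((β - γ) j).factorial) := by
          rw [prod_mul_distrib, prod_mul_distrib]; ring
      _ = _ := by rw [Nat.multinomial_spec]
  have hchoose := Nat.choose_mul_factorial_mul_factorial hnm
  have hm := hap (∑ j, β j)
  have hmn := hap (∑ j, β j - ∑ j, γ j)
  have hc : ((∑ j, β j).choose (∑ j, γ j) : ℝ) ≠ 0 := Nat.cast_ne_zero.mpr (Nat.choose_pos hnm).ne'
  unfold uiWeight
  rw [hsub]
  rw [← Nat.cast_inj (R := ℝ)] at hfact hchoose
  push_cast at hfact hchoose ⊢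
  field_simp
  rw [hfact, ← hchoose]
  ring

theorem sum_multinomial_smul_monomial_mul_apply_monomial (hap : ∀ k, 0 < a k)
    {T : (Fin d → ℕ) → Module.End ℂ (MvPolynomial (Fin d) ℂ)}
    (hT : ∀ α, IsWeightedBackwardShift (uiWeight a) (Finsupp.equivFunOnFinite.symm α) (T α))
    {m n : ℕ} (hmn : n ≤ m) {β : Fin d →₀ ℕ} (hβ : ∑ j, β j = m) (c : ℂ) :
    ∑ α ∈ Nat.antidiagonalTuple d n, (Nat.multinomial univ α : ℂ) •
        (monomial (Finsupp.equivFunOnFinite.symm α) 1 * T α (monomial β c)) =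
      ((a (m - n) / a m : ℝ) : ℂ) • monomial β c := by
  have hterm : ∀ α ∈ Nat.antidiagonalTuple d n, (Nat.multinomial univ α : ℂ) •
      (monomial (Finsupp.equivFunOnFinite.symm α) 1 * T α (monomial β c)) =
      (((∏ j, ((β j).choose (α j) : ℝ)) / m.choose n * (a (m - n) / a m) : ℝ) : ℂ) •
        monomial β c := by
    intro α hα
    rw [(hT α).monomial_mul_apply]
    split_ifs with hαβ
    · have hratio := multinomial_mul_uiWeight_div hap hαβ
      simp only [Finsupp.coe_equivFunOnFinite_symm, hβ, Nat.mem_antidiagonalTuple.mp hα] at hratio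
      rw [smul_smul, ← Complex.ofReal_natCast, ← Complex.ofReal_mul, hratio]
    · obtain ⟨i, hi⟩ : ∃ i, β i < α i := by simpa [Finsupp.le_def] using hαβ
      rw [prod_eq_zero (mem_univ i) (by exact_mod_cast Nat.choose_eq_zero_of_lt hi)]
      simp
  have hvdm := sum_piAntidiag_prod_choose univ β n
  rw [piAntidiag_univ_fin_eq_antidiagonalTuple, hβ] at hvdm
  have hc : (m.choose n : ℝ) ≠ 0 := Nat.cast_ne_zero.mpr (Nat.choose_pos hmn).ne'
  rw [sum_congr rfl hterm, ← sum_smul, ← Complex.ofReal_sum, ← sum_mul, ← sum_div]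
  simp only [← Nat.cast_prod, ← Nat.cast_sum, hvdm, div_self hc, one_mul]

end UnitarilyInvariant

theorem stmt_17_general (d : ℕ) (a : ℕ → ℝ) (hap : ∀ k, 0 < a k)
    (A : Fin d → Module.End ℂ (MvPolynomial (Fin d) ℂ))
    (hA : ∀ (j : Fin d) (p q : MvPolynomial (Fin d) ℂ),
      uiInner d a (A j p) q = uiInner d a p (MvPolynomial.X j * q))
    (m n : ℕ) (hmn : n ≤ m)
    (p : MvPolynomial (Fin d) ℂ) (hp : p.IsHomogeneous m) :
    ∑ α ∈ Finset.Nat.antidiagonalTuple d n,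
      (Nat.multinomial Finset.univ α : ℂ) •
        ((∏ j, MvPolynomial.X j ^ α j) * ((List.ofFn fun j => A j ^ α j).prod p))
      = (((a (m - n) / a m : ℝ)) : ℂ) • p := by
  have hw : ∀ β : Fin d →₀ ℕ, uiWeight a β ≠ 0 := fun β => (uiWeight_pos hap β).ne'
  have hshift : ∀ α : Fin d → ℕ, IsWeightedBackwardShift (uiWeight a)
      (Finsupp.equivFunOnFinite.symm α) (List.ofFn fun j => A j ^ α j).prod := fun α => by
    simpa only [Finsupp.smul_single_one, ← Finsupp.equivFunOnFinite_symm_eq_sum] using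
      IsWeightedBackwardShift.list_prod_ofFn hw fun j => (isWeightedBackwardShift_of_uiInner_adjoint hap (hA j)).pow hw (α j)
  let L : Module.End ℂ (MvPolynomial (Fin d) ℂ) := ∑ α ∈ Nat.antidiagonalTuple d n,
    (Nat.multinomial univ α : ℂ) •
      (LinearMap.mulLeft ℂ (monomial (Finsupp.equivFunOnFinite.symm α) 1) *
        (List.ofFn fun j => A j ^ α j).prod)
  have hL : L p = ((a (m - n) / a m : ℝ) : ℂ) • p :=
    hp.linearMap_apply_eq_smul fun β c hβ => by
      simpa only [L, LinearMap.sum_apply, LinearMap.smul_apply, Module.End.mul_apply,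
        LinearMap.mulLeft_apply] using sum_multinomial_smul_monomial_mul_apply_monomial hap hshift
          hmn (by rwa [← Finsupp.degree_eq_sum]) c
  simpa only [L, LinearMap.sum_apply, LinearMap.smul_apply, Module.End.mul_apply,
    LinearMap.mulLeft_apply, prod_X_pow_eq_monomial_equivFunOnFinite_symm] using hL

/-- If `A j` is the adjoint of multiplication by `z_j` with respect to the unitarily
invariant inner product with weights `aₙ > 0`, then for every homogeneous polynomial
`p` of degree `m ≥ n`, `∑_{|α|=n} (n!/α!) M_zᵅ (M_z*)ᵅ p = (a_{m-n}/a_m) p`. -/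
theorem stmt_17 (d : ℕ) (a : ℕ → ℝ) (ha0 : a 0 = 1) (hap : ∀ k, 0 < a k)
    (A : Fin d → Module.End ℂ (MvPolynomial (Fin d) ℂ))
    (hA : ∀ (j : Fin d) (p q : MvPolynomial (Fin d) ℂ),
      uiInner d a (A j p) q = uiInner d a p (MvPolynomial.X j * q))
    (m n : ℕ) (hmn : n ≤ m)
    (p : MvPolynomial (Fin d) ℂ) (hp : p.IsHomogeneous m) :
    ∑ α ∈ Finset.Nat.antidiagonalTuple d n,
      (Nat.multinomial Finset.univ α : ℂ) •
        ((∏ j, MvPolynomial.X j ^ α j) * ((List.ofFn fun j => A j ^ α j).prod p))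
      = (((a (m - n) / a m : ℝ)) : ℂ) • p :=
  stmt_17_general d a hap A hA m n hmn p hp
end
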